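/- arXiv:2205.05100 — 2 statements merged into one kernel-verified Lean document; each statement's English description precedes it below -/
import Mathlib

section
/- Let M be a simple graph on p vertices with m edges. Then the path energy satisfies PE(M) ≤ 2(p-1)m. -/
/-- For a simple graph `M` on `p` vertices with `m` edges, the path energy satisfies
`PE(M) ≤ 2(p-1)m`.  (The path matrix is symmetric with zero diagonal and
`0 ≤ P i j ≤ min (deg v_i) (deg v_j)` for `i ≠ j`.) -/
theorem path_energy_le_edges (p : ℕ) (M : SimpleGraph (Fin p))
    [DecidableRel M.Adj]
    (P : Matrix (Fin p) (Fin p) ℝ) (hP : P.IsHermitian)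
    (hdiag : ∀ i, P i i = 0)
    (hoff : ∀ i j, i ≠ j →
      0 ≤ P i j ∧ P i j ≤ ((min (M.degree i) (M.degree j) : ℕ) : ℝ)) :
    ∑ i, |hP.eigenvalues i| ≤ 2 * ((p : ℝ) - 1) * (M.edgeFinset.card : ℝ) := by
  classical
  set U : Matrix (Fin p) (Fin p) ℝ := (hP.eigenvectorUnitary : Matrix (Fin p) (Fin p) ℝ) with hUdef
  -- rows of U are unit vectors
  have hrow : ∀ a : Fin p, ∑ j, (U a j) ^ 2 = 1 := by
    intro a
    have hUU : U * star U = 1 := Matrix.mem_unitaryGroup_iff.mp hP.eigenvectorUnitary.2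
    have := congrFun (congrFun hUU a) a
    simpa [Matrix.mul_apply, Matrix.one_apply, sq] using this
  -- eigenvalue as quadratic form
  have heig : ∀ i, hP.eigenvalues i = ∑ j, ∑ k, U j i * (P j k * U k i) := by
    intro i
    rw [hP.eigenvalues_eq]
    simp [dotProduct, Matrix.mulVec, Finset.mul_sum, hUdef]
  -- entries of P are nonnegative
  have hPnn : ∀ j k, 0 ≤ P j k := by
    intro j k
    by_cases h : j = k
    · simp [h, hdiag k]
    · exact (hoff j k h).1
  -- step 1: trace norm ≤ entrywise ℓ¹ norm
  have step1 : ∑ i, |hP.eigenvalues i| ≤ ∑ j, ∑ k, P j k := by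
    have h1 : ∀ i, |hP.eigenvalues i| ≤ ∑ j, ∑ k, P j k * (|U j i| * |U k i|) := by
      intro i
      rw [heig i]
      calc |∑ j, ∑ k, U j i * (P j k * U k i)|
          ≤ ∑ j, |∑ k, U j i * (P j k * U k i)| := Finset.abs_sum_le_sum_abs _ _
        _ ≤ ∑ j, ∑ k, |U j i * (P j k * U k i)| :=
            Finset.sum_le_sum fun j _ => Finset.abs_sum_le_sum_abs _ _
        _ = ∑ j, ∑ k, P j k * (|U j i| * |U k i|) := by
            refine Finset.sum_congr rfl fun j _ => Finset.sum_congr rfl fun k _ => ?_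
            rw [abs_mul, abs_mul, abs_of_nonneg (hPnn j k)]
            ring
    calc ∑ i, |hP.eigenvalues i|
        ≤ ∑ i, ∑ j, ∑ k, P j k * (|U j i| * |U k i|) := Finset.sum_le_sum fun i _ => h1 i
      _ = ∑ j, ∑ k, P j k * (∑ i, |U j i| * |U k i|) := by
          rw [Finset.sum_comm]
          refine Finset.sum_congr rfl fun j _ => ?_
          rw [Finset.sum_comm]
          exact Finset.sum_congr rfl fun k _ => by rw [Finset.mul_sum]
      _ ≤ ∑ j, ∑ k, P j k * 1 := by
          refine Finset.sum_le_sum fun j _ => Finset.sum_le_sum fun k _ => ?_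
          refine mul_le_mul_of_nonneg_left ?_ (hPnn j k)
          calc ∑ i, |U j i| * |U k i|
              ≤ ∑ i, ((U j i) ^ 2 + (U k i) ^ 2) / 2 := by
                refine Finset.sum_le_sum fun i _ => ?_
                have := abs_nonneg (U j i - U k i)
                nlinarith [sq_abs (U j i), sq_abs (U k i), sq_nonneg (|U j i| - |U k i|)]
            _ = 1 := by
                rw [← Finset.sum_div, Finset.sum_add_distrib, hrow j, hrow k]
                norm_num
      _ = ∑ j, ∑ k, P j k := by simp
  -- step 2: entrywise sum ≤ (p-1) * Σ deg
  have step2 : ∑ j, ∑ k, P j k ≤ ((p : ℝ) - 1) * ∑ j, (M.degree j : ℝ) := by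
    have hrowP : ∀ j : Fin p, ∑ k, P j k ≤ ((p : ℝ) - 1) * (M.degree j : ℝ) := by
      intro j
      have hb : ∀ k ∈ Finset.univ, P j k ≤ (if k = j then 0 else (M.degree j : ℝ)) := by
        intro k _
        by_cases h : k = j
        · simp [h, hdiag j]
        · simp only [if_neg h]
          refine le_trans (hoff j k (Ne.symm h)).2 ?_
          exact_mod_cast Nat.cast_le.mpr (min_le_left _ _)
      calc ∑ k, P j k ≤ ∑ k, (if k = j then 0 else (M.degree j : ℝ)) := Finset.sum_le_sum hb
        _ = ((p : ℝ) - 1) * (M.degree j : ℝ) := by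
            rw [Finset.sum_ite, Finset.filter_eq', Finset.filter_ne']
            simp only [Finset.mem_univ, if_pos, Finset.sum_const, Finset.sum_const_zero,
              Finset.card_erase_of_mem, Finset.card_univ, Fintype.card_fin, zero_add]
            have hp : 1 ≤ p := j.pos
            have : ((p : ℝ) - 1) = ((p - 1 : ℕ) : ℝ) := by
              push_cast [hp]; ring
            rw [this, nsmul_eq_mul]
            ring
    calc ∑ j, ∑ k, P j k ≤ ∑ j, ((p : ℝ) - 1) * (M.degree j : ℝ) :=
          Finset.sum_le_sum fun j _ => hrowP j
      _ = ((p : ℝ) - 1) * ∑ j, (M.degree j : ℝ) := by rw [Finset.mul_sum]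
  have hdeg : ∑ j, (M.degree j : ℝ) = 2 * (M.edgeFinset.card : ℝ) := by
    have := M.sum_degrees_eq_twice_card_edges
    exact_mod_cast congrArg (Nat.cast : ℕ → ℝ) this
  calc ∑ i, |hP.eigenvalues i| ≤ ∑ j, ∑ k, P j k := step1
    _ ≤ ((p : ℝ) - 1) * ∑ j, (M.degree j : ℝ) := step2
    _ = 2 * ((p : ℝ) - 1) * (M.edgeFinset.card : ℝ) := by rw [hdeg]; ring
end

section
/- The path matrix of the hypercube graph Q_p has eigenvalues p(2^p - 1) with multiplicity 1 and -p with multiplicity 2^p - 1, and its path energy is 2p(2^p - 1). -/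
/-!
A matrix with zero diagonal and constant off-diagonal entry `c` is `c 𝟙𝟙ᵀ - c I`. The
rank-one part has characteristic polynomial `X ^ N - N c X ^ (N - 1)`, so shifting by `c` gives
`χ_A = (X + c) ^ (N - 1) (X - c (N - 1))`; for a Hermitian matrix the eigenvalues are exactly the
roots of `χ_A`, counted with multiplicity.
-/

open Polynomial Matrix

variable {n : Type*} [Fintype n] [DecidableEq n]

theorem Matrix.eq_vecMulVec_sub_scalar_of_offDiag_const {R : Type*} [CommRing R]
    {A : Matrix n n R} {c : R} (hdiag : ∀ i, A i i = 0) (hoff : ∀ i j, i ≠ j → A i j = c) :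
    A = vecMulVec (fun _ ↦ c) 1 - scalar n c := by
  ext i j
  rcases eq_or_ne i j with rfl | hij
  · simp [hdiag]
  · simp [hoff i j hij, hij]

theorem Matrix.charpoly_of_offDiag_const [Nonempty n] {R : Type*} [CommRing R]
    {A : Matrix n n R} {c : R} (hdiag : ∀ i, A i i = 0) (hoff : ∀ i j, i ≠ j → A i j = c) :
    A.charpoly = (X + C c) ^ (Fintype.card n - 1) * (X - C (c * (Fintype.card n - 1))) := by
  obtain ⟨k, hk⟩ : ∃ k, Fintype.card n = k + 1 := Nat.exists_eq_add_one.mpr Fintype.card_pos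
  rw [eq_vecMulVec_sub_scalar_of_offDiag_const hdiag hoff, charpoly_sub_scalar,
    charpoly_vecMulVec, hk]
  simp only [pow_succ, dotProduct, Pi.one_apply, mul_one, Finset.sum_const, Finset.card_univ,
    hk, nsmul_eq_mul, Nat.cast_add, Nat.cast_one, add_tsub_cancel_right, smul_eq_C_mul, map_mul,
    map_add, map_natCast, map_one, sub_comp, mul_comp, pow_comp, X_comp, add_comp, natCast_comp,
    one_comp, C_comp, add_sub_cancel_right]
  ring

theorem Matrix.IsHermitian.map_eigenvalues_eq_roots_charpoly {A : Matrix n n ℝ}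
    (hA : A.IsHermitian) :
    Finset.univ.val.map hA.eigenvalues = A.charpoly.roots := by
  simp [hA.roots_charpoly_eq_eigenvalues, RCLike.ofReal_real_eq_id]

theorem Polynomial.roots_X_add_C_pow_mul_X_sub_C {R : Type*} [CommRing R] [IsDomain R]
    (b a : R) (k : ℕ) :
    ((X + C b) ^ k * (X - C a)).roots = a ::ₘ Multiset.replicate k (-b) := by
  rw [roots_mul (mul_ne_zero (pow_ne_zero _ (X_add_C_ne_zero b)) (X_sub_C_ne_zero a)),
    roots_pow, roots_X_add_C, roots_X_sub_C, Multiset.nsmul_singleton, add_comm]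
  rfl

namespace Matrix.IsHermitian

variable [Nonempty n] {A : Matrix n n ℝ} (hA : A.IsHermitian) {c : ℝ}

theorem eigenvalues_multiset_of_offDiag_const (hdiag : ∀ i, A i i = 0)
    (hoff : ∀ i j, i ≠ j → A i j = c) :
    Finset.univ.val.map hA.eigenvalues =
      (c * (Fintype.card n - 1)) ::ₘ Multiset.replicate (Fintype.card n - 1) (-c) := by
  rw [hA.map_eigenvalues_eq_roots_charpoly, charpoly_of_offDiag_const hdiag hoff,
    roots_X_add_C_pow_mul_X_sub_C]

theorem sum_abs_eigenvalues_of_offDiag_const (hdiag : ∀ i, A i i = 0)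
    (hoff : ∀ i j, i ≠ j → A i j = c) :
    ∑ i, |hA.eigenvalues i| = 2 * |c| * (Fintype.card n - 1) := by
  rw [← Finset.sum_map_val, ← Function.comp_def abs, ← Multiset.map_map,
    hA.eigenvalues_multiset_of_offDiag_const hdiag hoff]
  have hcard : (1 : ℝ) ≤ Fintype.card n := by exact_mod_cast Fintype.card_pos
  simp only [Multiset.map_cons, abs_mul, abs_of_nonneg (sub_nonneg.2 hcard), Multiset.map_replicate,
    abs_neg, Multiset.sum_cons, Multiset.sum_replicate, nsmul_eq_mul, Nat.cast_sub Fintype.card_pos,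
    Nat.cast_one]
  ring

end Matrix.IsHermitian

/-- The path matrix of the hypercube `Q_p` (all off-diagonal entries `p`, size
`2^p`) has eigenvalues `p(2^p - 1)` with multiplicity 1 and `-p` with multiplicity
`2^p - 1`, and its path energy is `2p(2^p - 1)`. -/
theorem path_spectrum_hypercube (p : ℕ)
    (P : Matrix (Fin (2 ^ p)) (Fin (2 ^ p)) ℝ) (hP : P.IsHermitian)
    (hdiag : ∀ i, P i i = 0)
    (hoff : ∀ i j, i ≠ j → P i j = (p : ℝ)) :
    Finset.univ.val.map hP.eigenvalues =
      ((p : ℝ) * ((2 : ℝ) ^ p - 1)) ::ₘ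
        Multiset.replicate (2 ^ p - 1) (-(p : ℝ)) ∧
    ∑ i, |hP.eigenvalues i| = 2 * (p : ℝ) * ((2 : ℝ) ^ p - 1) := by
  constructor
  · simpa using hP.eigenvalues_multiset_of_offDiag_const hdiag hoff
  · simpa using hP.sum_abs_eigenvalues_of_offDiag_const hdiag hoff
end
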